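/- Let R be a commutative ring with identity, S a multiplicative subset of R, n a positive integer, and I an ideal of R with I ∩ S = ∅. (i) If the extension I·R_S is an n-absorbing ideal of the localization R_S and Sat_S(I) = I : s for some s ∈ S, then I is an S-n-absorbing ideal of R. (ii) Conversely, if R is locally divided and I is an S-n-absorbing ideal of R, then I·R_S is an n-absorbing ideal of R_S and Sat_S(I) = I : s for some s ∈ S. -/

import Mathlib

/-- `I` is `S`-`n`-absorbing with associated element `s`. -/
def IsSNAbsorbingAssoc {R : Type*} [CommRing R] (s : R) (n : ℕ) (I : Ideal R) : Prop :=
  ∀ r : Fin (n + 1) → R, (∏ i, r i) ∈ I →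
    ∃ j : Fin (n + 1), s * ∏ i ∈ Finset.univ.erase j, r i ∈ I

/-- `I` is an `S`-`n`-absorbing ideal. -/
def IsSNAbsorbing {R : Type*} [CommRing R] (S : Set R) (n : ℕ) (I : Ideal R) : Prop :=
  ∃ s ∈ S, IsSNAbsorbingAssoc s n I
/-- `I` is an `n`-absorbing ideal. -/
def IsNAbsorbing {R : Type*} [CommRing R] (n : ℕ) (I : Ideal R) : Prop :=
  ∀ r : Fin (n + 1) → R, (∏ i, r i) ∈ I →
    ∃ j : Fin (n + 1), ∏ i ∈ Finset.univ.erase j, r i ∈ I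

/-- A commutative ring is divided if for every prime `P` and every element `a`,
either `a ∈ P` or `P ⊆ aT`. -/
def IsDividedRing (T : Type*) [CommRing T] : Prop :=
  ∀ P : Ideal T, P.IsPrime → ∀ a : T, a ∈ P ∨ P ≤ Ideal.span {a}

/-- `R` is locally divided if its localization at every maximal ideal is divided. -/
def IsLocallyDivided (R : Type*) [CommRing R] : Prop :=
  ∀ (M : Ideal R) (hM : M.IsMaximal),
    haveI : M.IsPrime := hM.isPrime
    IsDividedRing (Localization.AtPrime M)

/-!
Part (i) is a direct transfer: a product in `I` becomes a product in `I·R_S`, and the factor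
dropped there comes back to `I` after multiplication by `s`, because `Sat_S(I) = I : s`.

For part (ii), localizing the `s`-absorbing property gives that `I·R_S` is `n`-absorbing. For the
saturation, feeding `(x s^c, s², …, s²)` to the absorbing property shows `I : s^a ⊆ I : s^(2n-1)`
for all `a`, which makes `W = I : s^(2n-1)` an honest `n`-absorbing ideal with the same
`S`-saturation as `I`. An `n`-absorbing ideal has at most `n` minimal primes (prime avoidance);
let `σ` be the product of the `n`-th powers of elements of `S` chosen in those minimal primes of
`W` that meet `S`. If `y t ∈ W` with `t ∈ S`, then at every maximal ideal `M` the localization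
`W_M` lies in a divided ring, so `√W_M` is prime: either `t ∉ √W_M` and `y ∈ W_M` because
`n`-absorbing ideals of divided rings are saturated outside their radical, or `√W_M` contracts to
a minimal prime of `W` containing `t` and `σ ∈ W_M`. Hence `y σ ∈ W`, i.e. `Sat_S(W) = W : σ`.
-/

open Finset

section Absorbing

variable {R : Type*} [CommRing R] {n : ℕ} {s a b x : R} {I : Ideal R}

theorem isSNAbsorbingAssoc_one_iff : IsSNAbsorbingAssoc 1 n I ↔ IsNAbsorbing n I := by
  simp only [IsSNAbsorbingAssoc, IsNAbsorbing, one_mul]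

theorem Fin.prod_univ_erase_ite_zero (a b : R) (j : Fin (n + 1)) :
    ∏ i ∈ univ.erase j, (if i = 0 then a else b) = if j = 0 then b ^ n else a * b ^ (n - 1) := by
  have hcard : #(univ.erase j) = n := by simp
  split_ifs with hj
  · rw [prod_congr rfl fun i hi => if_neg (hj ▸ ne_of_mem_erase hi), Finset.prod_const, hcard]
  · have h0 : (0 : Fin (n + 1)) ∈ univ.erase j := mem_erase.mpr ⟨Ne.symm hj, mem_univ _⟩
    rw [← mul_prod_erase _ _ h0, if_pos rfl,
      prod_congr rfl fun i hi => if_neg (ne_of_mem_erase hi), Finset.prod_const,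
      card_erase_of_mem h0, hcard]

theorem IsSNAbsorbingAssoc.mul_pow_mem (h : IsSNAbsorbingAssoc s n I) (hab : a * b ^ n ∈ I) :
    s * b ^ n ∈ I ∨ s * (a * b ^ (n - 1)) ∈ I := by
  obtain ⟨j, hj⟩ := h (fun i => if i = 0 then a else b)
    (by simpa [Fin.prod_univ_succ, Fin.succ_ne_zero] using hab)
  rw [Fin.prod_univ_erase_ite_zero] at hj
  split_ifs at hj
  exacts [.inl hj, .inr hj]

theorem IsNAbsorbing.mul_pow_mem (h : IsNAbsorbing n I) (hab : a * b ^ n ∈ I) :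
    b ^ n ∈ I ∨ a * b ^ (n - 1) ∈ I := by
  simpa only [one_mul] using (isSNAbsorbingAssoc_one_iff.mpr h).mul_pow_mem hab

theorem IsNAbsorbing.pow_mem_of_pow_mem (hn : 0 < n) (h : IsNAbsorbing n I) {m : ℕ}
    (hx : x ^ m ∈ I) : x ^ n ∈ I := by
  induction m using Nat.strong_induction_on with
  | _ m ih =>
    rcases le_or_gt m n with hm | hm
    · rw [← Nat.add_sub_cancel' hm, pow_add]
      exact I.mul_mem_right _ hx
    · obtain ⟨c, rfl⟩ := Nat.exists_eq_add_of_lt hm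
      refine (h.mul_pow_mem (a := x ^ (c + 1)) (by rwa [← pow_add, add_comm])).elim id
        fun h' => ih (n + c) (by omega) ?_
      rwa [← pow_add, show c + 1 + (n - 1) = n + c by omega] at h'

theorem IsNAbsorbing.pow_mem_of_mem_radical (hn : 0 < n) (h : IsNAbsorbing n I)
    (hx : x ∈ I.radical) : x ^ n ∈ I :=
  h.pow_mem_of_pow_mem hn hx.choose_spec

theorem IsSNAbsorbingAssoc.mul_pow_mem_of_mul_pow_mem (hn : 0 < n) (h : IsSNAbsorbingAssoc s n I)
    (hs : ∀ k, s ^ k ∉ I) {a : ℕ} (hx : x * s ^ a ∈ I) : x * s ^ (2 * n - 1) ∈ I := by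
  induction a using Nat.strong_induction_on with
  | _ a ih =>
    rcases le_or_gt a (2 * n - 1) with ha | ha
    · rw [← Nat.add_sub_cancel' ha, pow_add, ← mul_assoc]
      exact I.mul_mem_right _ hx
    · obtain ⟨c, rfl⟩ : ∃ c, a = c + 2 * n := ⟨a - 2 * n, by omega⟩
      obtain ⟨m, rfl⟩ : ∃ m, n = m + 1 := ⟨n - 1, by omega⟩
      -- `b = s²` makes each round lower the exponent of `s` by one
      rcases h.mul_pow_mem (a := x * s ^ c) (b := s ^ 2) (by rwa [mul_assoc, ← pow_mul, ← pow_add])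
        with h' | h'
      · exact absurd (by rwa [← pow_mul, ← pow_succ'] at h') (hs _)
      · refine ih (c + 2 * m + 1) (by omega) ?_
        rw [Nat.add_sub_cancel, ← pow_mul] at h'
        convert h' using 1
        ring

theorem IsSNAbsorbingAssoc.isNAbsorbing_colon (hn : 0 < n) (h : IsSNAbsorbingAssoc s n I)
    (hs : ∀ k, s ^ k ∉ I) : IsNAbsorbing n (I.colon (Ideal.span {s ^ (2 * n - 1)})) := by
  intro r hr
  rw [Ideal.mem_colon_span_singleton] at hr
  set m := 2 * n - 1
  obtain ⟨j, hj⟩ := h (fun i => r i * s ^ m) (by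
    rw [prod_mul_distrib, prod_const, card_univ, Fintype.card_fin, pow_succ, ← mul_assoc,
      mul_right_comm]
    exact I.mul_mem_right _ hr)
  refine ⟨j, Ideal.mem_colon_span_singleton.mpr
    (h.mul_pow_mem_of_mul_pow_mem hn hs (a := 1 + m * n) ?_)⟩
  rw [prod_mul_distrib, prod_const, card_erase_of_mem (mem_univ _), card_univ,
    Fintype.card_fin, Nat.add_sub_cancel] at hj
  convert hj using 1
  ring

end Absorbing

section Localization

variable {R : Type*} [CommRing R] (S : Submonoid R) {B : Type*} [CommRing B] [Algebra R B]
  [IsLocalization S B] {n : ℕ} {s : R} {I : Ideal R}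

theorem IsSNAbsorbingAssoc.isNAbsorbing_map (hs : s ∈ S) (h : IsSNAbsorbingAssoc s n I) :
    IsNAbsorbing n (I.map (algebraMap R B)) := by
  intro r hr
  choose p hp using fun i => IsLocalization.surj S (r i)
  have key : ∀ E : Finset (Fin (n + 1)),
      ∏ i ∈ E, r i ∈ I.map (algebraMap R B) ↔ ∃ c ∈ S, (∏ i ∈ E, (p i).1) * c ∈ I := by
    intro E
    have hE : (∏ i ∈ E, r i) * algebraMap R B ↑(∏ i ∈ E, (p i).2) =
        algebraMap R B (∏ i ∈ E, (p i).1) := by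
      rw [Submonoid.coe_finsetProd, map_prod, map_prod, ← prod_mul_distrib]
      exact prod_congr rfl fun i _ => hp i
    rw [← Ideal.unit_mul_mem_iff_mem _ (IsLocalization.map_units B (∏ i ∈ E, (p i).2)),
      mul_comm, hE, IsLocalization.algebraMap_mem_map_algebraMap_iff S]
    simp only [mul_comm]
  obtain ⟨w, hw, hpw⟩ := (key univ).mp hr
  obtain ⟨j, hj⟩ := h (fun i => (p i).1 * w) (by
    rw [prod_mul_distrib, prod_const, card_univ, Fintype.card_fin, pow_succ, ← mul_assoc,
      mul_right_comm]
    exact I.mul_mem_right _ hpw)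
  refine ⟨j, (key _).mpr ⟨s * w ^ n, S.mul_mem hs (S.pow_mem hw n), ?_⟩⟩
  rw [prod_mul_distrib, prod_const, card_erase_of_mem (mem_univ _), card_univ,
    Fintype.card_fin, Nat.add_sub_cancel] at hj
  convert hj using 1
  ring

theorem IsNAbsorbing.isSNAbsorbingAssoc_of_map (h : IsNAbsorbing n (I.map (algebraMap R B)))
    (hsat : ∀ x, (∃ t ∈ S, x * t ∈ I) → x * s ∈ I) : IsSNAbsorbingAssoc s n I := by
  intro r hr
  obtain ⟨j, hj⟩ := h (fun i => algebraMap R B (r i)) (by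
    rw [← map_prod]
    exact Ideal.mem_map_of_mem _ hr)
  rw [← map_prod, IsLocalization.algebraMap_mem_map_algebraMap_iff S] at hj
  obtain ⟨t, ht, htr⟩ := hj
  exact ⟨j, mul_comm s _ ▸ hsat _ ⟨t, ht, mul_comm t _ ▸ htr⟩⟩

end Localization

section Divided

variable {T : Type*} [CommRing T]

theorem IsDividedRing.le_or_le (hd : IsDividedRing T) {P : Ideal T} (hP : P.IsPrime)
    (Q : Ideal T) : P ≤ Q ∨ Q ≤ P := by
  refine or_iff_not_imp_right.mpr fun hQP => ?_
  obtain ⟨a, haQ, haP⟩ := SetLike.not_le_iff_exists.mp hQP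
  exact ((hd P hP a).resolve_left haP).trans ((Ideal.span_singleton_le_iff_mem Q).mpr haQ)

theorem IsDividedRing.isPrime_radical (hd : IsDividedRing T) {J : Ideal T} (hJ : J ≠ ⊤) :
    J.radical.IsPrime := by
  refine ⟨mt Ideal.radical_eq_top.mp hJ, fun {a b} hab => ?_⟩
  by_contra! h
  simp only [Ideal.radical_eq_sInf, Submodule.mem_sInf, Set.mem_ofPred_eq, not_forall] at h
  obtain ⟨⟨P, ⟨hJP, hP⟩, haP⟩, ⟨Q, ⟨hJQ, hQ⟩, hbQ⟩⟩ := h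
  have hab' : ∀ {K : Ideal T}, J ≤ K → K.IsPrime → a * b ∈ K := fun hJK hK =>
    hK.radical_le_iff.mpr hJK hab
  rcases hd.le_or_le hP Q with hPQ | hQP
  · exact hbQ (hPQ ((hP.mem_or_mem (hab' hJP hP)).resolve_left haP))
  · exact haP (hQP ((hQ.mem_or_mem (hab' hJQ hQ)).resolve_right hbQ))

theorem IsDividedRing.exists_eq_mul_of_mem (hd : IsDividedRing T) {P : Ideal T} (hP : P.IsPrime)
    {u w : T} (hu : u ∉ P) (hw : w ∈ P) : ∃ w' ∈ P, w = u * w' := by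
  obtain ⟨w', rfl⟩ := Ideal.mem_span_singleton'.mp ((hd P hP u).resolve_left hu hw)
  exact ⟨w', (hP.mem_or_mem hw).resolve_right hu, mul_comm _ _⟩

theorem IsDividedRing.mem_of_mul_mem (hd : IsDividedRing T) {n : ℕ} (hn : 0 < n) {J : Ideal T}
    (hJ : IsNAbsorbing n J) {u z : T} (hu : u ∉ J.radical) (hzu : z * u ∈ J) : z ∈ J := by
  have hP := hd.isPrime_radical (J := J) fun h => hu (h ▸ Ideal.le_radical Submodule.mem_top)
  -- `√J ⊆ uT` lets us peel off `n` factors of `u` from `z ∈ √J`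
  have hdiv : ∀ k, ∃ w ∈ J.radical, z = u ^ k * w := by
    intro k
    induction k with
    | zero => exact ⟨z, (hP.mem_or_mem (Ideal.le_radical hzu)).resolve_right hu, by simp⟩
    | succ k ih =>
      obtain ⟨w, hw, rfl⟩ := ih
      obtain ⟨w', hw', rfl⟩ := hd.exists_eq_mul_of_mem hP hu hw
      exact ⟨w', hw', by ring⟩
  obtain ⟨w, -, rfl⟩ := hdiv n
  rcases hJ.mul_pow_mem (a := u * w) (b := u) (by convert hzu using 1; ring) with h | h
  · exact absurd (hP.mem_of_pow_mem n (Ideal.le_radical h)) hu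
  · rwa [mul_right_comm, ← pow_succ', Nat.sub_add_cancel hn] at h

end Divided

section MinimalPrimes

variable {R : Type*} [CommRing R] {n : ℕ} {J : Ideal R}

theorem Ideal.exists_notMem_mul_mem_radical_of_mem_minimalPrimes {P : Ideal R}
    (hP : P ∈ J.minimalPrimes) {x : R} (hx : x ∈ P) : ∃ u ∉ P, u * x ∈ J.radical := by
  have := hP.1.1
  obtain ⟨k, hk⟩ : algebraMap R (Localization.AtPrime P) x ∈ (J.map (algebraMap R _)).radical :=
    (IsLocalization.AtPrime.radical_map_of_mem_minimalPrimes (Localization.AtPrime P) P J hP).symm ▸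
      Ideal.mem_map_of_mem _ hx
  rw [← map_pow, IsLocalization.algebraMap_mem_map_algebraMap_iff P.primeCompl] at hk
  obtain ⟨u, hu, hux⟩ := hk
  exact ⟨u, hu, k + 1, by convert J.mul_mem_left (u ^ k * x) hux using 1; ring⟩

theorem IsNAbsorbing.not_injective_of_mem_minimalPrimes (hJ : IsNAbsorbing n J)
    {P : Fin (n + 1) → Ideal R} (hP : ∀ i, P i ∈ J.minimalPrimes) : ¬ Function.Injective P := by
  intro hinj
  have hprime : ∀ i, (P i).IsPrime := fun i => (hP i).1.1
  have havoid : ∀ i, ∃ x ∈ P i, ∀ j ≠ i, x ∉ P j := by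
    intro i
    have : ¬ ((P i : Set R) ⊆ ⋃ j ∈ (↑(univ.erase i) : Set (Fin (n + 1))), P j) := by
      rw [Ideal.subset_union_prime i i fun j _ _ _ => hprime j]
      rintro ⟨j, hj, hle⟩
      exact ne_of_mem_erase hj (hinj (le_antisymm hle ((hP j).2 (hP i).1 hle))).symm
    simpa [Set.not_subset] using this
  choose x hxP hxnot using havoid
  choose c hcP hcx using fun i =>
    Ideal.exists_notMem_mul_mem_radical_of_mem_minimalPrimes (hP i) (hxP i)
  set u := ∑ i, c i * ∏ k ∈ univ.erase i, x k with hu_def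
  have hu : ∀ j, u ∉ P j := by
    intro j huj
    have hrest : ∑ i ∈ univ.erase j, c i * ∏ k ∈ univ.erase i, x k ∈ P j :=
      Ideal.sum_mem _ fun i hi => Ideal.mul_mem_left _ _ <| Ideal.mem_of_dvd _
        (dvd_prod_of_mem _ (mem_erase.mpr ⟨(ne_of_mem_erase hi).symm, mem_univ _⟩)) (hxP j)
    have hj : c j * ∏ k ∈ univ.erase j, x k ∈ P j := by
      have := Ideal.sub_mem _ huj hrest
      rwa [hu_def, ← add_sum_erase _ _ (mem_univ j), add_sub_cancel_right] at this
    rcases (hprime j).mem_or_mem hj with h | h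
    · exact hcP j h
    · have := hprime j
      obtain ⟨k, hk, hxk⟩ := Ideal.IsPrime.prod_mem_iff.mp h
      exact hxnot k j (ne_of_mem_erase hk).symm hxk
  have hux : u * ∏ i, x i ∈ J.radical := by
    rw [sum_mul]
    refine Ideal.sum_mem _ fun i _ => ?_
    have : c i * (∏ k ∈ univ.erase i, x k) * ∏ k, x k =
        c i * x i * (∏ k ∈ univ.erase i, x k) ^ 2 := by
      rw [← mul_prod_erase univ x (mem_univ i)]
      ring
    rw [this]
    exact Ideal.mul_mem_right _ _ (hcx i)
  obtain ⟨m, hm⟩ := hux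
  obtain ⟨j, hj⟩ := hJ (fun i => (u * x i) ^ m) (by
    have : ∏ i, (u * x i) ^ m = (u * ∏ i, x i) ^ m * u ^ (m * n) := by
      rw [prod_pow, prod_mul_distrib, prod_const, card_univ, Fintype.card_fin]
      ring
    rw [this]
    exact J.mul_mem_right _ hm)
  have := hprime j
  obtain ⟨i, hi, hmem⟩ := Ideal.IsPrime.prod_mem_iff.mp ((hP j).1.2 hj)
  rcases (hprime j).mem_or_mem ((hprime j).mem_of_pow_mem m hmem) with h | h
  exacts [hu j h, hxnot i j (ne_of_mem_erase hi).symm h]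

theorem IsNAbsorbing.finite_minimalPrimes (hJ : IsNAbsorbing n J) : J.minimalPrimes.Finite := by
  by_contra h
  let e := Set.Infinite.natEmbedding _ h
  exact hJ.not_injective_of_mem_minimalPrimes (P := fun i : Fin (n + 1) => (e i : Ideal R))
    (fun i => (e i).2) fun i j hij => Fin.ext (e.injective (Subtype.ext hij))

theorem IsLocalization.comap_radical_map_mem_minimalPrimes (S : Submonoid R) {B : Type*}
    [CommRing B] [Algebra R B] [IsLocalization S B]
    (h : (J.map (algebraMap R B)).radical.IsPrime) :
    (J.map (algebraMap R B)).radical.comap (algebraMap R B) ∈ J.minimalPrimes := by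
  have : (J.map (algebraMap R B)).radical ∈ (J.map (algebraMap R B)).minimalPrimes := by
    rw [← Ideal.radical_minimalPrimes, Ideal.minimalPrimes_eq_subsingleton_self]
    rfl
  exact (IsLocalization.minimalPrimes_map S B J).subset this

end MinimalPrimes

section Saturation

variable {R : Type*} [CommRing R] {n : ℕ} {s : R} {I W : Ideal R}

theorem Ideal.mem_of_forall_isMaximal_exists_mul_mem {x : R}
    (h : ∀ M : Ideal R, M.IsMaximal → ∃ u ∉ M, u * x ∈ W) : x ∈ W := by
  by_contra hx
  obtain ⟨M, hM, hle⟩ := Ideal.exists_le_maximal (W.colon (Ideal.span {x})) fun htop => hx <| by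
    simpa using Ideal.mem_colon_span_singleton.mp
      (htop ▸ Submodule.mem_top : (1 : R) ∈ W.colon (Ideal.span {x}))
  obtain ⟨u, hu, hux⟩ := h M hM
  exact hu (hle (Ideal.mem_colon_span_singleton.mpr hux))

theorem IsDividedRing.algebraMap_mem_map_or_exists_mem_minimalPrimes (S : Submonoid R)
    {B : Type*} [CommRing B] [Algebra R B] [IsLocalization S B] (hd : IsDividedRing B)
    (hn : 0 < n) (hW : IsNAbsorbing n W) {y t : R} (hyt : y * t ∈ W) :
    algebraMap R B y ∈ W.map (algebraMap R B) ∨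
      ∃ Q ∈ W.minimalPrimes, t ∈ Q ∧ ∀ g ∈ Q, algebraMap R B (g ^ n) ∈ W.map (algebraMap R B) := by
  set J := W.map (algebraMap R B)
  have hJ : IsNAbsorbing n J := (isSNAbsorbingAssoc_one_iff.mpr hW).isNAbsorbing_map S S.one_mem
  rcases eq_or_ne J ⊤ with hJtop | hJtop
  · exact .inl (hJtop ▸ Submodule.mem_top)
  by_cases ht : algebraMap R B t ∈ J.radical
  · refine .inr ⟨_, IsLocalization.comap_radical_map_mem_minimalPrimes S (hd.isPrime_radical hJtop),
      ht, fun g hg => ?_⟩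
    rw [map_pow]
    exact hJ.pow_mem_of_mem_radical hn hg
  · refine .inl (hd.mem_of_mul_mem hn hJ ht ?_)
    rw [← map_mul]
    exact Ideal.mem_map_of_mem _ hyt

theorem IsNAbsorbing.exists_mul_mem_of_mul_mem (hdiv : IsLocallyDivided R) (hn : 0 < n)
    (hW : IsNAbsorbing n W) (S : Submonoid R) :
    ∃ σ ∈ S, ∀ y t, t ∈ S → y * t ∈ W → y * σ ∈ W := by
  classical
  set bad := {P | P ∈ W.minimalPrimes ∧ ∃ v ∈ S, v ∈ P}
  have hbad : bad.Finite := hW.finite_minimalPrimes.subset fun P hP => hP.1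
  choose! g hgS hgP using fun P (hP : P ∈ bad) => hP.2
  set σ := ∏ P ∈ hbad.toFinset, g P ^ n
  refine ⟨σ, prod_mem fun P hP => pow_mem (hgS P (hbad.mem_toFinset.mp hP)) n,
    fun y t ht hyt => Ideal.mem_of_forall_isMaximal_exists_mul_mem fun M hM => ?_⟩
  have := hM.isPrime
  suffices algebraMap R (Localization.AtPrime M) (y * σ) ∈
      W.map (algebraMap R (Localization.AtPrime M)) from
    (IsLocalization.algebraMap_mem_map_algebraMap_iff M.primeCompl _ _ _).mp this
  rw [map_mul]
  rcases (hdiv M hM).algebraMap_mem_map_or_exists_mem_minimalPrimes M.primeCompl hn hW hyt with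
    hy | ⟨Q, hQ, htQ, hpow⟩
  · exact Ideal.mul_mem_right _ _ hy
  · have hQbad : Q ∈ bad := ⟨hQ, t, ht, htQ⟩
    exact Ideal.mul_mem_left _ _ <| Ideal.mem_of_dvd _
      (map_dvd _ (dvd_prod_of_mem _ (hbad.mem_toFinset.mpr hQbad))) (hpow _ (hgP Q hQbad))

theorem IsSNAbsorbingAssoc.exists_mul_mem_of_mul_mem (hdiv : IsLocallyDivided R) (hn : 0 < n)
    {S : Submonoid R} (hIS : Disjoint (I : Set R) S) (hs : s ∈ S) (h : IsSNAbsorbingAssoc s n I) :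
    ∃ σ ∈ S, ∀ x t, t ∈ S → x * t ∈ I → x * σ ∈ I := by
  have hsI : ∀ k, s ^ k ∉ I := fun k hk => Set.disjoint_left.mp hIS hk (S.pow_mem hs k)
  obtain ⟨σ, hσ, hsat⟩ := (h.isNAbsorbing_colon hn hsI).exists_mul_mem_of_mul_mem hdiv hn S
  refine ⟨σ * s ^ (2 * n - 1), S.mul_mem hσ (S.pow_mem hs _), fun x t ht hxt => ?_⟩
  rw [← mul_assoc, ← Ideal.mem_colon_span_singleton]
  exact hsat x t ht (Ideal.le_colon hxt)

theorem setOf_exists_mul_mem_eq_colon {S : Submonoid R} {σ : R} (hσ : σ ∈ S)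
    (h : ∀ x t, t ∈ S → x * t ∈ I → x * σ ∈ I) :
    {x : R | ∃ t ∈ S, x * t ∈ I} = (I.colon (Ideal.span {σ}) : Set R) := by
  ext x
  rw [SetLike.mem_coe, Ideal.mem_colon_span_singleton]
  exact ⟨fun ⟨t, ht, hxt⟩ => h x t ht hxt, fun hx => ⟨σ, hσ, hx⟩⟩

end Saturation

theorem stmt_14 {R : Type*} [CommRing R] (S : Submonoid R) (n : ℕ) (hn : 0 < n)
    (I : Ideal R) (hIS : Disjoint (I : Set R) (S : Set R)) :
    ((IsNAbsorbing n (I.map (algebraMap R (Localization S))) ∧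
        ∃ s ∈ S, {x : R | ∃ t ∈ S, x * t ∈ I} = (I.colon (Ideal.span {s}) : Set R)) →
      IsSNAbsorbing (S : Set R) n I) ∧
    (IsLocallyDivided R → IsSNAbsorbing (S : Set R) n I →
      IsNAbsorbing n (I.map (algebraMap R (Localization S))) ∧
        ∃ s ∈ S, {x : R | ∃ t ∈ S, x * t ∈ I} = (I.colon (Ideal.span {s}) : Set R)) := by
  constructor
  · rintro ⟨habs, s, hsS, hsat⟩
    exact ⟨s, hsS, habs.isSNAbsorbingAssoc_of_map S fun x hx =>
      Ideal.mem_colon_span_singleton.mp (hsat.subset hx)⟩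
  · rintro hdiv ⟨s, hsS, habs⟩
    obtain ⟨σ, hσ, hsat⟩ := habs.exists_mul_mem_of_mul_mem hdiv hn hIS hsS
    exact ⟨habs.isNAbsorbing_map S hsS, σ, hσ, setOf_exists_mul_mem_eq_colon hσ hsat⟩
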